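/- Let 0 < μ < 1 and define s(c) = ((1−μ)/2)·h((c−μ)/(1−μ)) and t(c) = ((1+μ)/2)·h((c+μ)/(1+μ)) for c ∈ [μ, 1], where h is binary entropy. Then s(c) < t(c) for all c ∈ [μ, 1). -/

import Mathlib

/-- Binary entropy in bits (with `h 0 = h 1 = 0` since `logb 2 0 = 0`). -/
noncomputable def binEnt (p : ℝ) : ℝ := -(p * Real.logb 2 p) - (1 - p) * Real.logb 2 (1 - p)

/-!
With `φ = negMulLog`, scaling gives `a · h(x/a) = (φ x + φ (a - x) - φ a) / log 2`, so both sides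
share the term `φ (1 - c)` and the claim becomes `φ (1 + μ) - φ (1 - μ) < φ (c + μ) - φ (c - μ)`:
the increments of the strictly concave `φ` over intervals of length `2μ` strictly decrease.
-/

open Real

/-- Writing `y` and `x + d` as convex combinations of `x` and `y + d` with swapped weights and
adding the two strict concavity inequalities. -/
theorem StrictConcaveOn.sub_lt_sub_of_lt {s : Set ℝ} {f : ℝ → ℝ} (hf : StrictConcaveOn ℝ s f)
    {x y d : ℝ} (hx : x ∈ s) (hyd : y + d ∈ s) (hxy : x < y) (hd : 0 < d) :
    f (y + d) - f y < f (x + d) - f x := by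
  set t := d / (y + d - x)
  have ht : 0 < t := div_pos hd (by linarith)
  have ht' : 0 < 1 - t := by rw [sub_pos, div_lt_one (by linarith)]; linarith
  have hne : x ≠ y + d := by linarith
  have hxd := hf.2 hx hyd hne ht' ht (by ring)
  have hy := hf.2 hx hyd hne ht ht' (by ring)
  have hxd_eq : (1 - t) • x + t • (y + d) = x + d := by
    simp only [smul_eq_mul, t]; field_simp; ring
  have hy_eq : t • x + (1 - t) • (y + d) = y := by
    simp only [smul_eq_mul, t]; field_simp; ring
  rw [hxd_eq] at hxd
  rw [hy_eq] at hy
  simp only [smul_eq_mul] at hxd hy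
  linarith

theorem binEnt_eq_binEntropy_div (p : ℝ) : binEnt p = binEntropy p / log 2 := by
  simp only [binEnt, binEntropy_eq_negMulLog_add_negMulLog_one_sub, negMulLog, logb]
  ring

theorem mul_binEnt_div (x : ℝ) {a : ℝ} (ha : a ≠ 0) :
    a * binEnt (x / a) = (negMulLog x + negMulLog (a - x) - negMulLog a) / log 2 := by
  have hx : negMulLog x = a * negMulLog (x / a) + x / a * negMulLog a := by
    rw [← negMulLog_mul, div_mul_cancel₀ x ha]
  have hax : negMulLog (a - x) = a * negMulLog (1 - x / a) + (1 - x / a) * negMulLog a := by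
    rw [← negMulLog_mul, sub_mul, div_mul_cancel₀ x ha, one_mul]
  rw [binEnt_eq_binEntropy_div, binEntropy_eq_negMulLog_add_negMulLog_one_sub, hx, hax]
  ring

/-- Lemma 2 of the paper: for `μ ≤ c < 1`,
`s(c) = ((1-μ)/2)·h((c-μ)/(1-μ)) < ((1+μ)/2)·h((c+μ)/(1+μ)) = t(c)`. -/
theorem lemma_s_lt_t (μ : ℝ) (hμ0 : 0 < μ) (hμ1 : μ < 1) :
    ∀ c ∈ Set.Ico μ (1 : ℝ),
      ((1 - μ) / 2) * binEnt ((c - μ) / (1 - μ)) <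
        ((1 + μ) / 2) * binEnt ((c + μ) / (1 + μ)) := by
  rintro c ⟨hμc, hc1⟩
  have key := strictConcaveOn_negMulLog.sub_lt_sub_of_lt (x := c - μ) (y := 1 - μ) (d := 2 * μ)
    (Set.mem_Ici.2 (by linarith)) (Set.mem_Ici.2 (by linarith)) (by linarith) (by linarith)
  rw [show 1 - μ + 2 * μ = 1 + μ by ring, show c - μ + 2 * μ = c + μ by ring] at key
  rw [div_mul_eq_mul_div, div_mul_eq_mul_div, mul_binEnt_div _ (by linarith),
    mul_binEnt_div _ (by linarith), show 1 - μ - (c - μ) = 1 + μ - (c + μ) by ring]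
  gcongr ?_ / _ / _
  linarith
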